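/- arXiv:0710.3250 — 4 statements merged into one kernel-verified Lean document; each statement's English description precedes it below -/
import Mathlib

section
/- Let K be a field and let q ∈ K be of free type, i.e., q ≠ 0 and {n}_q ≠ 0 for every nonzero integer n (equivalently: q^n ≠ 1 for every nonzero integer n when q ≠ 1, and char K = 0 when q = 1). If P and Q are two commuting elements of the q-deformed Heisenberg algebra H_q over K, then there exists a nonzero bivariate polynomial F(x,y) with coefficients in K such that F(P,Q) = 0 in H_q. -/
noncomputable section

open Classical in
/-- The `q`-integer `{n}_q = (qⁿ − 1)/(q − 1)` for `q ≠ 1`, and `{n}_q = n·1_K` for `q = 1`. -/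
def qInt (K : Type*) [Field K] (q : K) (n : ℤ) : K :=
  if q = 1 then (n : K) else (q ^ n - 1) / (q - 1)

/-- The defining relation `AB = q·BA + 1` of the `q`-deformed Heisenberg algebra,
imposed on the free algebra on two generators. -/
inductive qHeisRel (K : Type*) [Field K] (q : K) :
    FreeAlgebra K (Fin 2) → FreeAlgebra K (Fin 2) → Prop
  | rel : qHeisRel K q (FreeAlgebra.ι K 0 * FreeAlgebra.ι K 1)
      (q • (FreeAlgebra.ι K 1 * FreeAlgebra.ι K 0) + 1)

/-- The `q`-deformed Heisenberg algebra `H_q = K⟨A,B⟩/⟨AB − qBA − 1⟩`. -/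
abbrev qHeis (K : Type*) [Field K] (q : K) : Type _ := RingQuot (qHeisRel K q)

/-- The generator `A` of `H_q`. -/
def qA (K : Type*) [Field K] (q : K) : qHeis K q :=
  RingQuot.mkAlgHom K (qHeisRel K q) (FreeAlgebra.ι K 0)

/-- The generator `B` of `H_q`. -/
def qB (K : Type*) [Field K] (q : K) : qHeis K q :=
  RingQuot.mkAlgHom K (qHeisRel K q) (FreeAlgebra.ι K 1)

/-!
`H_q` acts faithfully on `K[ℤ]`, and every element acts as a banded operator
`e_n ↦ ∑ₛ (D s)({n}_q) e_{n+s}` whose band data `D s` are polynomials; since `q` is of free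
type the values `{n}_q` are pairwise distinct, so the band data are unique. The leading exponent
(top band, degree of its polynomial) is additive under multiplication. For commuting `x` and `y`,
comparing the top bands of `xy = yx`, after replacing `x, y` by suitable powers, gives
`F · G(σ_N) = G · F(σ_N)` for the top polynomials and the affine substitution `σ_N` shifting
`{n}_q` to `{n+N}_q`; this forces `deg F = deg G`, and hence the leading exponents of commuting
elements are proportional. So all linear combinations of `P^i Q^j`, `i, j ≤ M`, have their
leading exponents on one line through the origin inside a box of size `O(M)`. Distinct leading
exponents bound the dimension, so these `(M + 1)²` products are dependent once `M` is large.
-/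

open Polynomial Module

namespace QHeis

variable {K : Type*} [Field K]

def IsFreeType (q : K) : Prop := q ≠ 0 ∧ ∀ n : ℤ, n ≠ 0 → qInt K q n ≠ 0

variable {q : K}

section QInt

lemma qInt_zero : qInt K q 0 = 0 := by
  unfold qInt; split <;> simp

lemma qInt_one : qInt K q 1 = 1 := by
  unfold qInt; split
  · simp
  · rw [zpow_one, div_self (sub_ne_zero.mpr ‹q ≠ 1›)]

lemma qInt_add (hq : q ≠ 0) (m n : ℤ) :
    qInt K q (m + n) = q ^ n * qInt K q m + qInt K q n := by
  unfold qInt; split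
  · subst q; push_cast; simp
  · field_simp [sub_ne_zero.mpr ‹q ≠ 1›]
    rw [zpow_add₀ hq]
    ring

lemma IsFreeType.qInt_injective (hq : IsFreeType q) : Function.Injective (qInt K q) := by
  intro m n h
  have hsplit := qInt_add hq.1 (m - n) n
  rw [sub_add_cancel, h, right_eq_add, mul_eq_zero] at hsplit
  by_contra hmn
  exact hsplit.elim (zpow_ne_zero n hq.1) (hq.2 _ (sub_ne_zero.mpr hmn))

lemma IsFreeType.eq_zero_of_eval_qInt (hq : IsFreeType q) {ι : Type*} [Infinite ι] {f : ι → ℤ}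
    (hf : Function.Injective f) {p : K[X]} (h : ∀ i, p.eval (qInt K q (f i)) = 0) : p = 0 :=
  p.eq_zero_of_infinite_isRoot <|
    Set.infinite_of_injective_forall_mem (hq.qInt_injective.comp hf) h

end QInt

section QShift

def qShift (q : K) (s : ℤ) : K[X] := C (q ^ s) * X + C (qInt K q s)

lemma eval_qShift (hq : q ≠ 0) (s n : ℤ) :
    (qShift q s).eval (qInt K q n) = qInt K q (n + s) := by
  simp [qShift, qInt_add hq n s]

lemma natDegree_qShift (hq : q ≠ 0) (s : ℤ) : (qShift q s).natDegree = 1 :=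
  natDegree_linear (zpow_ne_zero s hq)

lemma qShift_ne_zero (hq : q ≠ 0) (s : ℤ) : qShift q s ≠ 0 :=
  ne_zero_of_natDegree_gt (natDegree_qShift hq s ▸ Nat.zero_lt_one)

lemma qShift_zero : qShift q 0 = X := by
  simp [qShift, qInt_zero]

lemma qShift_comp (hq : q ≠ 0) (a b : ℤ) : (qShift q a).comp (qShift q b) = qShift q (a + b) := by
  simp only [qShift, add_comp, mul_comp, C_comp, X_comp, add_comm a b, qInt_add hq b a,
    zpow_add₀ hq, C_mul, C_add]
  ring

lemma natDegree_comp_qShift (hq : q ≠ 0) (p : K[X]) (s : ℤ) :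
    (p.comp (qShift q s)).natDegree = p.natDegree := by
  rw [natDegree_comp, natDegree_qShift hq, mul_one]

lemma comp_qShift_ne_zero (hq : q ≠ 0) {p : K[X]} (hp : p ≠ 0) (s : ℤ) :
    p.comp (qShift q s) ≠ 0 := by
  intro h
  have := congrArg leadingCoeff h
  rw [leadingCoeff_comp (by simp [natDegree_qShift hq]), leadingCoeff_zero] at this
  exact mul_ne_zero (leadingCoeff_ne_zero.mpr hp)
    (pow_ne_zero _ (leadingCoeff_ne_zero.mpr (qShift_ne_zero hq s))) this

/-- Evaluated at `{n}_q`, this is the `q`-falling factorial `{n}_q {n-1}_q ⋯ {n-j+1}_q`. -/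
def qDescPochhammer (q : K) (j : ℕ) : K[X] := ∏ r ∈ Finset.range j, qShift q (-r)

lemma qDescPochhammer_succ (j : ℕ) :
    qDescPochhammer q (j + 1) = qDescPochhammer q j * qShift q (-j) :=
  Finset.prod_range_succ _ _

lemma degree_qDescPochhammer (hq : q ≠ 0) (j : ℕ) : (qDescPochhammer q j).degree = j := by
  simp [qDescPochhammer, degree_prod, degree_eq_natDegree (qShift_ne_zero hq _),
    natDegree_qShift hq]

end QShift

section BandOp

def bandEval (q : K) (n : ℤ) : (ℤ →₀ K[X]) →ₗ[K] (ℤ →₀ K) :=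
  Finsupp.lsum K fun s => Finsupp.lsingle (n + s) ∘ₗ Polynomial.leval (qInt K q n)

/-- Band data `D : ℤ →₀ K[X]` encode the operator `e_n ↦ ∑ₛ (D s)({n}_q) e_{n+s}` on `K[ℤ]`;
`bandEval q n D` is its column at `e_n`. -/
def bandOp (q : K) : (ℤ →₀ K[X]) →ₗ[K] Module.End K (ℤ →₀ K) :=
  (Finsupp.llift (ℤ →₀ K) K K ℤ).toLinearMap ∘ₗ LinearMap.pi (bandEval q)

lemma bandEval_apply (q : K) (n : ℤ) (D : ℤ →₀ K[X]) :
    bandEval q n D = D.sum fun s f => Finsupp.single (n + s) (f.eval (qInt K q n)) :=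
  rfl

lemma bandEval_single (n s : ℤ) (p : K[X]) :
    bandEval q n (Finsupp.single s p) = Finsupp.single (n + s) (p.eval (qInt K q n)) := by
  simp [bandEval]

lemma bandEval_apply_add (D : ℤ →₀ K[X]) (n t : ℤ) :
    bandEval q n D (n + t) = (D t).eval (qInt K q n) := by
  induction D using Finsupp.induction_linear with
  | zero => simp
  | add D E hD hE => simp [hD, hE]
  | single s p => by_cases h : s = t <;> simp [bandEval_single, h]

lemma bandOp_single (D : ℤ →₀ K[X]) (n : ℤ) (c : K) :
    bandOp q D (Finsupp.single n c) = c • bandEval q n D := by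
  simp [bandOp]

lemma bandOp_injective (hq : IsFreeType q) : Function.Injective (bandOp q) := by
  refine (injective_iff_map_eq_zero _).mpr fun D hD => ?_
  ext t : 1
  refine hq.eq_zero_of_eval_qInt Function.injective_id fun n => ?_
  rw [id, ← bandEval_apply_add, ← one_smul K (bandEval q n D), ← bandOp_single, hD]
  rfl

def bandMul (q : K) (D E : ℤ →₀ K[X]) : ℤ →₀ K[X] :=
  E.sum fun t g => D.sum fun s f => Finsupp.single (s + t) (g * f.comp (qShift q t))

lemma bandMul_single_single (s t : ℤ) (f g : K[X]) :
    bandMul q (Finsupp.single s f) (Finsupp.single t g) =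
      Finsupp.single (s + t) (g * f.comp (qShift q t)) := by
  simp [bandMul]

lemma bandOp_bandMul (hq : q ≠ 0) (D E : ℤ →₀ K[X]) :
    bandOp q (bandMul q D E) = bandOp q D * bandOp q E := by
  refine Finsupp.lhom_ext fun n c => ?_
  rw [Module.End.mul_apply, bandOp_single, bandOp_single, map_smul]
  congr 1
  rw [bandEval_apply q n E, bandMul, map_finsuppSum, map_finsuppSum]
  refine Finsupp.sum_congr fun t _ => ?_
  rw [bandOp_single, map_finsuppSum, bandEval_apply q (n + t) D, Finsupp.smul_sum]
  refine Finsupp.sum_congr fun s _ => ?_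
  rw [bandEval_single, Finsupp.smul_single, smul_eq_mul, eval_mul, eval_comp, eval_qShift hq,
    add_comm s t, add_assoc]

lemma bandOp_single_zero_one : bandOp q (Finsupp.single 0 1) = 1 := by
  refine Finsupp.lhom_ext fun n c => ?_
  simp [bandOp_single, bandEval_single, Finsupp.smul_single]

end BandOp

section LeadingExponent

open Classical in
/-- Junk value `0` for `D = 0`. -/
def topBand (D : ℤ →₀ K[X]) : ℤ :=
  if h : D = 0 then 0 else D.support.max' (Finsupp.support_nonempty_iff.mpr h)

def leadExp (D : ℤ →₀ K[X]) : ℤ × ℕ := (topBand D, (D (topBand D)).natDegree)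

variable {D E : ℤ →₀ K[X]}

lemma leadExp_fst : (leadExp D).1 = topBand D := rfl

lemma leadExp_snd : (leadExp D).2 = (D (topBand D)).natDegree := rfl

lemma topBand_mem_support (hD : D ≠ 0) : topBand D ∈ D.support := by
  rw [topBand, dif_neg hD]
  exact Finset.max'_mem _ _

lemma apply_topBand_ne_zero (hD : D ≠ 0) : D (topBand D) ≠ 0 :=
  Finsupp.mem_support_iff.mp (topBand_mem_support hD)

lemma le_topBand {t : ℤ} (ht : t ∈ D.support) : t ≤ topBand D := by
  rw [topBand, dif_neg (Finsupp.support_nonempty_iff.mp ⟨t, ht⟩)]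
  exact Finset.le_max' _ _ ht

lemma topBand_eq_of_apply_ne_zero {t : ℤ} (ht : D t ≠ 0) (h : ∀ u, t < u → D u = 0) :
    topBand D = t := by
  have hD : D ≠ 0 := fun h0 => ht (by rw [h0, Finsupp.zero_apply])
  refine le_antisymm (not_lt.mp fun hlt => apply_topBand_ne_zero hD (h _ hlt)) ?_
  exact le_topBand (Finsupp.mem_support_iff.mpr ht)

lemma leadExp_single {t : ℤ} {p : K[X]} (hp : p ≠ 0) :
    leadExp (Finsupp.single t p) = (t, p.natDegree) := by
  have htop : topBand (Finsupp.single t p) = t :=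
    topBand_eq_of_apply_ne_zero (by simpa using hp) fun u hu => by simp [hu.ne]
  simp [leadExp, htop]

lemma bandMul_apply_eq_zero_of_lt {t : ℤ} (ht : topBand D + topBand E < t) :
    bandMul q D E t = 0 := by
  simp only [bandMul, Finsupp.sum_apply, Finsupp.single_apply]
  refine Finset.sum_eq_zero fun u hu => Finset.sum_eq_zero fun s hs => if_neg ?_
  have := le_topBand hu
  have := le_topBand hs
  omega

lemma bandMul_apply_topBand_add (hD : D ≠ 0) (hE : E ≠ 0) :
    bandMul q D E (topBand D + topBand E) =
      E (topBand E) * (D (topBand D)).comp (qShift q (topBand E)) := by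
  simp only [bandMul, Finsupp.sum_apply, Finsupp.single_apply]
  rw [Finsupp.sum, Finset.sum_eq_single_of_mem _ (topBand_mem_support hE),
    Finsupp.sum, Finset.sum_eq_single_of_mem _ (topBand_mem_support hD), if_pos rfl]
  · intro s hs hne
    have := le_topBand hs
    exact if_neg (by omega)
  · intro u hu hne
    refine Finset.sum_eq_zero fun s hs => if_neg ?_
    have := le_topBand hu
    have := le_topBand hs
    omega

lemma bandMul_apply_topBand_add_ne_zero (hq : q ≠ 0) (hD : D ≠ 0) (hE : E ≠ 0) :
    bandMul q D E (topBand D + topBand E) ≠ 0 := by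
  rw [bandMul_apply_topBand_add hD hE]
  exact mul_ne_zero (apply_topBand_ne_zero hE)
    (comp_qShift_ne_zero hq (apply_topBand_ne_zero hD) _)

lemma bandMul_ne_zero (hq : q ≠ 0) (hD : D ≠ 0) (hE : E ≠ 0) : bandMul q D E ≠ 0 :=
  fun h => bandMul_apply_topBand_add_ne_zero hq hD hE (by rw [h, Finsupp.zero_apply])

lemma topBand_bandMul (hq : q ≠ 0) (hD : D ≠ 0) (hE : E ≠ 0) :
    topBand (bandMul q D E) = topBand D + topBand E :=
  topBand_eq_of_apply_ne_zero (bandMul_apply_topBand_add_ne_zero hq hD hE)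
    fun _ => bandMul_apply_eq_zero_of_lt

lemma leadExp_bandMul (hq : q ≠ 0) (hD : D ≠ 0) (hE : E ≠ 0) :
    leadExp (bandMul q D E) = leadExp D + leadExp E := by
  rw [leadExp, topBand_bandMul hq hD hE, bandMul_apply_topBand_add hD hE,
    natDegree_mul (apply_topBand_ne_zero hE) (comp_qShift_ne_zero hq (apply_topBand_ne_zero hD) _),
    natDegree_comp_qShift hq, add_comm (E _).natDegree]
  rfl

lemma finrank_le_card_of_leadExp_mem {W : Submodule K (ℤ →₀ K[X])} {Γ : Finset (ℤ × ℕ)}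
    (hW : ∀ D ∈ W, D ≠ 0 → leadExp D ∈ Γ) : finrank K W ≤ Γ.card := by
  let coeffAt : (ℤ →₀ K[X]) →ₗ[K] (Γ → K) :=
    LinearMap.pi fun γ => lcoeff K γ.1.2 ∘ₗ Finsupp.lapply γ.1.1
  have hinj : Function.Injective (coeffAt ∘ₗ W.subtype) := by
    refine (injective_iff_map_eq_zero _).mpr fun D hD => ?_
    by_contra h0
    have hD0 : (D : ℤ →₀ K[X]) ≠ 0 := by simpa using h0
    exact leadingCoeff_ne_zero.mpr (apply_topBand_ne_zero hD0)
      (congrFun hD ⟨_, hW D D.2 hD0⟩)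
  simpa using LinearMap.finrank_le_finrank_of_injective hinj

end LeadingExponent

section BandBox

def bandBox (b : ℕ) : Submodule K (ℤ →₀ K[X]) where
  carrier := {D | (∀ t ∈ D.support, t.natAbs ≤ b) ∧ ∀ t, (D t).natDegree ≤ b}
  zero_mem' := by simp
  add_mem' {D E} hD hE := by
    classical
    refine ⟨fun t ht => ?_, fun t => natDegree_add_le_of_degree_le (hD.2 t) (hE.2 t)⟩
    rcases Finset.mem_union.mp (Finsupp.support_add ht) with h | h
    exacts [hD.1 t h, hE.1 t h]
  smul_mem' c D hD :=
    ⟨fun t ht => hD.1 t (Finsupp.support_smul ht), fun t => (natDegree_smul_le _ _).trans (hD.2 t)⟩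

variable {D E : ℤ →₀ K[X]}

lemma bandBox_mono {a b : ℕ} (h : a ≤ b) : bandBox (K := K) a ≤ bandBox b :=
  fun _ hD => ⟨fun t ht => (hD.1 t ht).trans h, fun t => (hD.2 t).trans h⟩

lemma single_mem_bandBox {b : ℕ} {t : ℤ} {p : K[X]} (ht : t.natAbs ≤ b) (hp : p.natDegree ≤ b) :
    Finsupp.single t p ∈ bandBox b := by
  classical
  refine ⟨fun u hu => ?_, fun u => ?_⟩
  · rw [Finset.mem_singleton.mp (Finsupp.support_single_subset hu)]
    exact ht
  · rw [Finsupp.single_apply]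
    split_ifs
    exacts [hp, natDegree_zero.trans_le (Nat.zero_le b)]

lemma exists_mem_bandBox (D : ℤ →₀ K[X]) : ∃ b, D ∈ bandBox b := by
  let f (t : ℤ) := max t.natAbs (D t).natDegree
  refine ⟨D.support.sup f, fun t ht => (le_max_left _ _).trans (Finset.le_sup (f := f) ht),
    fun t => ?_⟩
  by_cases ht : t ∈ D.support
  · exact (le_max_right _ _).trans (Finset.le_sup (f := f) ht)
  · simp [Finsupp.notMem_support_iff.mp ht]

lemma bandMul_mem_bandBox (hq : q ≠ 0) {a b : ℕ} (hD : D ∈ bandBox a) (hE : E ∈ bandBox b) :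
    bandMul q D E ∈ bandBox (a + b) := by
  refine Submodule.finsuppSum_mem _ _ _ _ fun t ht =>
    Submodule.finsuppSum_mem _ _ _ _ fun s hs => single_mem_bandBox ?_ ?_
  · have := hD.1 s (Finsupp.mem_support_iff.mpr hs)
    have := hE.1 t (Finsupp.mem_support_iff.mpr ht)
    have := Int.natAbs_add_le s t
    omega
  · refine natDegree_mul_le.trans ?_
    rw [natDegree_comp_qShift hq, add_comm a b]
    exact add_le_add (hE.2 t) (hD.2 s)

lemma leadExp_mem_of_mem_bandBox {b : ℕ} (hD : D ∈ bandBox b) (h0 : D ≠ 0) :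
    leadExp D ∈ Finset.Icc (-(b : ℤ)) b ×ˢ Finset.Iic b := by
  have := hD.1 _ (topBand_mem_support h0)
  simp only [Finset.mem_product, Finset.mem_Icc, Finset.mem_Iic, leadExp]
  exact ⟨by omega, hD.2 _⟩

end BandBox

lemma card_le_of_pairwise_proportional (b : ℕ) {Γ : Finset (ℤ × ℕ)}
    (hΓ : Γ ⊆ Finset.Icc (-(b : ℤ)) b ×ˢ Finset.Iic b)
    (hprop : ∀ γ ∈ Γ, ∀ γ' ∈ Γ, γ.1 * (γ'.2 : ℤ) = γ'.1 * γ.2) : Γ.card ≤ 2 * b + 1 := by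
  by_cases h : ∃ γ₀ ∈ Γ, γ₀.1 ≠ 0
  · obtain ⟨γ₀, hγ₀, h0⟩ := h
    have hinj : Set.InjOn Prod.fst (Γ : Set (ℤ × ℕ)) := fun γ hγ γ' hγ' h => by
      have h1 := hprop γ₀ hγ₀ γ (Finset.mem_coe.mp hγ)
      have h2 := hprop γ₀ hγ₀ γ' (Finset.mem_coe.mp hγ')
      rw [h, ← h2] at h1
      exact Prod.ext h (by exact_mod_cast mul_left_cancel₀ h0 h1)
    calc Γ.card ≤ (Finset.Icc (-(b : ℤ)) b).card :=
          Finset.card_le_card_of_injOn _ (fun γ hγ => (Finset.mem_product.mp (hΓ hγ)).1) hinj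
      _ = 2 * b + 1 := by rw [Int.card_Icc]; omega
  · push Not at h
    have hinj : Set.InjOn Prod.snd Γ := fun γ hγ γ' hγ' hsnd =>
      Prod.ext ((h γ hγ).trans (h γ' hγ').symm) hsnd
    calc Γ.card ≤ (Finset.Iic b).card :=
          Finset.card_le_card_of_injOn _ (fun γ hγ => (Finset.mem_product.mp (hΓ hγ)).2) hinj
      _ ≤ 2 * b + 1 := by rw [Nat.card_Iic]; omega

section Heisenberg

lemma qA_mul_qB : qA K q * qB K q = q • (qB K q * qA K q) + 1 := by
  simpa only [qA, qB, map_mul, map_smul, map_add, map_one] using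
    RingQuot.mkAlgHom_rel K (qHeisRel.rel (K := K) (q := q))

lemma qA_mul_qB_pow_succ (hq : q ≠ 0) (k : ℕ) :
    qA K q * qB K q ^ (k + 1) =
      q ^ (k + 1) • (qB K q ^ (k + 1) * qA K q) + qInt K q (k + 1) • qB K q ^ k := by
  induction k with
  | zero => simp [qA_mul_qB, qInt_one]
  | succ k ih =>
    rw [pow_succ _ (k + 1), ← mul_assoc, ih, add_mul, smul_mul_assoc, smul_mul_assoc, mul_assoc,
      qA_mul_qB, mul_add, mul_smul_comm, mul_one, ← mul_assoc, ← pow_succ, ← pow_succ, smul_add,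
      smul_smul, ← pow_succ, add_assoc, ← add_smul]
    congr 2
    rw [show ((k + 1 : ℕ) : ℤ) + 1 = 1 + ((k + 1 : ℕ) : ℤ) from add_comm _ _, qInt_add hq 1,
      qInt_one, mul_one, zpow_natCast, Nat.cast_succ]

def monomial (q : K) (p : ℕ × ℕ) : qHeis K q := qB K q ^ p.1 * qA K q ^ p.2

lemma qA_mul_monomial_mem_span (hq : q ≠ 0) (p : ℕ × ℕ) :
    qA K q * monomial q p ∈ Submodule.span K (Set.range (monomial q)) := by
  obtain ⟨_ | k, j⟩ := p
  · refine Submodule.subset_span ⟨(0, j + 1), ?_⟩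
    simp [monomial, pow_succ']
  · rw [monomial, ← mul_assoc, qA_mul_qB_pow_succ hq, add_mul, smul_mul_assoc, smul_mul_assoc,
      mul_assoc, ← pow_succ']
    exact add_mem (Submodule.smul_mem _ _ (Submodule.subset_span ⟨(k + 1, j + 1), rfl⟩))
      (Submodule.smul_mem _ _ (Submodule.subset_span ⟨(k, j), rfl⟩))

lemma span_monomial (hq : q ≠ 0) : Submodule.span K (Set.range (monomial q)) = ⊤ := by
  set N := Submodule.span K (Set.range (monomial q))
  have hmul : ∀ x : qHeis K q, ∀ y ∈ N, x * y ∈ N := by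
    intro x
    obtain ⟨x, rfl⟩ := RingQuot.mkAlgHom_surjective K (qHeisRel K q) x
    induction x using FreeAlgebra.induction with
    | grade0 r => exact fun y hy => by simpa [Algebra.smul_def] using N.smul_mem r hy
    | grade1 i =>
      refine fun y hy => (Submodule.span_le (p := N.comap (LinearMap.mulLeft K _))).mpr ?_ hy
      rintro _ ⟨⟨k, j⟩, rfl⟩
      fin_cases i
      · exact qA_mul_monomial_mem_span hq (k, j)
      · refine Submodule.subset_span ⟨(k + 1, j), ?_⟩
        simp [monomial, qB, pow_succ', mul_assoc]
    | mul a b ha hb => exact fun y hy => by rw [map_mul, mul_assoc]; exact ha _ (hb y hy)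
    | add a b ha hb => exact fun y hy => by rw [map_add, add_mul]; exact add_mem (ha y hy) (hb y hy)
  refine Submodule.eq_top_iff'.mpr fun x => ?_
  simpa using hmul x 1 (Submodule.subset_span ⟨(0, 0), by simp [monomial]⟩)

/-- The faithful representation of `H_q` on `K[ℤ]`: `A` acts as the `q`-derivative
`e_n ↦ {n}_q e_{n-1}` and `B` as the shift `e_n ↦ e_{n+1}`. -/
def rho (hq : q ≠ 0) : qHeis K q →ₐ[K] Module.End K (ℤ →₀ K) :=
  RingQuot.liftAlgHom K ⟨FreeAlgebra.lift K
    ![bandOp q (Finsupp.single (-1) X), bandOp q (Finsupp.single 1 1)], by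
    rintro _ _ ⟨⟩
    simp only [map_mul, map_add, map_smul, map_one, FreeAlgebra.lift_ι_apply,
      Matrix.cons_val_zero, Matrix.cons_val_one]
    rw [← bandOp_bandMul hq, ← bandOp_bandMul hq, ← bandOp_single_zero_one, ← map_smul,
      ← map_add, bandMul_single_single, bandMul_single_single]
    simp [qShift, qInt_one, Finsupp.smul_single, smul_eq_C_mul]⟩

lemma rho_qA (hq : q ≠ 0) : rho hq (qA K q) = bandOp q (Finsupp.single (-1) X) := by
  simp [rho, qA]

lemma rho_qB (hq : q ≠ 0) : rho hq (qB K q) = bandOp q (Finsupp.single 1 1) := by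
  simp [rho, qB]

def bandMonomial (q : K) (p : ℕ × ℕ) : ℤ →₀ K[X] :=
  Finsupp.single ((p.1 : ℤ) - p.2) (qDescPochhammer q p.2)

lemma rho_monomial (hq : q ≠ 0) (p : ℕ × ℕ) :
    rho hq (monomial q p) = bandOp q (bandMonomial q p) := by
  have hB (i : ℕ) : rho hq (qB K q) ^ i = bandOp q (Finsupp.single i 1) := by
    induction i with
    | zero => simp [bandOp_single_zero_one]
    | succ i ih =>
      rw [pow_succ', ih, rho_qB, ← bandOp_bandMul hq, bandMul_single_single]
      simp [add_comm]
  have hA (j : ℕ) : rho hq (qA K q) ^ j = bandOp q (Finsupp.single (-j) (qDescPochhammer q j)) := by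
    induction j with
    | zero => simp [qDescPochhammer, bandOp_single_zero_one]
    | succ j ih =>
      rw [pow_succ', ih, rho_qA, ← bandOp_bandMul hq, bandMul_single_single, qDescPochhammer_succ]
      simp [add_comm]
  rw [monomial, map_mul, map_pow, map_pow, hA, hB, ← bandOp_bandMul hq, bandMul_single_single]
  simp [bandMonomial, sub_eq_add_neg]

lemma linearIndependent_bandMonomial (hq : q ≠ 0) : LinearIndependent K (bandMonomial q) := by
  have hseq := (Polynomial.Sequence.mk _ (degree_qDescPochhammer hq)).linearIndependent
  refine (Finsupp.linearIndependent_single (φ := fun _ : ℤ => ℕ) (fun _ => qDescPochhammer q)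
    fun _ => hseq).comp (fun p : ℕ × ℕ => ⟨(p.1 : ℤ) - p.2, p.2⟩) fun p p' h => ?_
  simp only [Sigma.mk.injEq, heq_eq_eq] at h
  exact Prod.ext (by omega) h.2

lemma linearIndependent_monomial (hq : IsFreeType q) : LinearIndependent K (monomial q) := by
  refine LinearIndependent.of_comp (rho hq.1).toLinearMap ?_
  have h : ⇑(rho hq.1).toLinearMap ∘ monomial q = bandOp q ∘ bandMonomial q :=
    funext (rho_monomial hq.1)
  rw [h]
  exact (linearIndependent_bandMonomial hq.1).map_injOn _ (bandOp_injective hq).injOn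

def monomialBasis (hq : IsFreeType q) : Basis (ℕ × ℕ) K (qHeis K q) :=
  Basis.mk (linearIndependent_monomial hq) (span_monomial hq.1).ge

end Heisenberg

section BandData

def bandData (hq : IsFreeType q) : qHeis K q →ₗ[K] (ℤ →₀ K[X]) :=
  (monomialBasis hq).constr K (bandMonomial q)

lemma bandData_monomial (hq : IsFreeType q) (p : ℕ × ℕ) :
    bandData hq (monomial q p) = bandMonomial q p := by
  rw [← Basis.mk_apply (linearIndependent_monomial hq) (span_monomial hq.1).ge, bandData,
    monomialBasis, Basis.constr_basis]

lemma bandOp_bandData (hq : IsFreeType q) (x : qHeis K q) :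
    bandOp q (bandData hq x) = rho hq.1 x := by
  have h : bandOp q ∘ₗ bandData hq = (rho hq.1).toLinearMap :=
    (monomialBasis hq).ext fun p => by
      simp [monomialBasis, bandData_monomial, rho_monomial]
  exact LinearMap.congr_fun h x

lemma bandData_injective (hq : IsFreeType q) : Function.Injective (bandData hq) := by
  refine LinearMap.injective_of_linearIndependent (span_monomial hq.1) ?_
  have h : bandData hq ∘ monomial q = bandMonomial q := funext (bandData_monomial hq)
  rw [h]
  exact linearIndependent_bandMonomial hq.1

lemma bandData_mul (hq : IsFreeType q) (x y : qHeis K q) :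
    bandData hq (x * y) = bandMul q (bandData hq x) (bandData hq y) :=
  bandOp_injective hq <| by simp only [bandOp_bandMul hq.1, bandOp_bandData, map_mul]

lemma bandData_one (hq : IsFreeType q) : bandData hq 1 = Finsupp.single 0 1 :=
  bandOp_injective hq <| by rw [bandOp_bandData, map_one, bandOp_single_zero_one]

lemma bandData_pow_mem_bandBox (hq : IsFreeType q) {x : qHeis K q} {a : ℕ}
    (hx : bandData hq x ∈ bandBox a) (k : ℕ) : bandData hq (x ^ k) ∈ bandBox (k * a) := by
  induction k with
  | zero =>
    rw [pow_zero, bandData_one, zero_mul]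
    exact single_mem_bandBox (by simp) (by simp)
  | succ k ih =>
    rw [pow_succ, bandData_mul, add_mul, one_mul]
    exact bandMul_mem_bandBox hq.1 ih hx

lemma bandData_ne_zero (hq : IsFreeType q) {x : qHeis K q} (hx : x ≠ 0) : bandData hq x ≠ 0 :=
  (map_ne_zero_iff _ (bandData_injective hq)).mpr hx

theorem noZeroDivisors (hq : IsFreeType q) : NoZeroDivisors (qHeis K q) where
  eq_zero_or_eq_zero_of_mul_eq_zero {x y} h := by
    by_contra! hxy
    refine bandMul_ne_zero hq.1 (bandData_ne_zero hq hxy.1) (bandData_ne_zero hq hxy.2) ?_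
    rw [← bandData_mul, h, map_zero]

lemma leadExp_bandData_mul (hq : IsFreeType q) {x y : qHeis K q} (hx : x ≠ 0) (hy : y ≠ 0) :
    leadExp (bandData hq (x * y)) = leadExp (bandData hq x) + leadExp (bandData hq y) := by
  rw [bandData_mul]
  exact leadExp_bandMul hq.1 (bandData_ne_zero hq hx) (bandData_ne_zero hq hy)

lemma leadExp_bandData_pow (hq : IsFreeType q) {x : qHeis K q} (hx : x ≠ 0) (k : ℕ) :
    leadExp (bandData hq (x ^ k)) = k • leadExp (bandData hq x) := by
  have := noZeroDivisors hq
  induction k with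
  | zero => simp [bandData_one, leadExp_single one_ne_zero]
  | succ k ih => rw [pow_succ, leadExp_bandData_mul hq (pow_ne_zero k hx) hx, ih, succ_nsmul]

end BandData

section FunctionalEquation

lemma mul_comp_qShift_nat_mul (hq : q ≠ 0) {F G : K[X]} (hG : G ≠ 0) {N : ℤ}
    (h : F * G.comp (qShift q N) = G * F.comp (qShift q N)) (k : ℕ) :
    F * G.comp (qShift q (k * N)) = G * F.comp (qShift q (k * N)) := by
  induction k with
  | zero => simp [qShift_zero, mul_comm]
  | succ k ih =>
    have hk := congrArg (fun p => p.comp (qShift q (k * N))) h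
    simp only [mul_comp, comp_assoc, qShift_comp hq] at hk
    rw [show N + k * N = ((k + 1 : ℕ) : ℤ) * N by push_cast; ring] at hk
    refine mul_left_cancel₀ (comp_qShift_ne_zero hq hG (k * N)) ?_
    linear_combination (G.comp (qShift q (((k + 1 : ℕ) : ℤ) * N))) * ih + G * hk

/-- `F / G` takes the same value at the infinitely many points `{n₀ + kN}_q`, so it is constant. -/
lemma natDegree_eq_of_mul_comp_qShift (hq : IsFreeType q) {F G : K[X]} (hF : F ≠ 0) (hG : G ≠ 0)
    {N : ℤ} (hN : N ≠ 0) (h : F * G.comp (qShift q N) = G * F.comp (qShift q N)) :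
    F.natDegree = G.natDegree := by
  obtain ⟨n₀, hn₀⟩ : ∃ n₀ : ℤ, (F * G).eval (qInt K q n₀) ≠ 0 := by
    by_contra! h0
    exact mul_ne_zero hF hG (hq.eq_zero_of_eval_qInt Function.injective_id h0)
  rw [eval_mul] at hn₀
  have hprop : F * C (G.eval (qInt K q n₀)) = G * C (F.eval (qInt K q n₀)) := by
    rw [← sub_eq_zero]
    refine hq.eq_zero_of_eval_qInt (f := fun k : ℕ => n₀ + k * N) (fun k k' hk => ?_) fun k => ?_
    · simpa [hN] using hk
    · have := congrArg (eval (qInt K q n₀)) (mul_comp_qShift_nat_mul hq.1 hG h k)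
      simp only [eval_mul, eval_comp, eval_qShift hq.1] at this
      simp only [eval_sub, eval_mul, eval_C]
      linear_combination -this
  have := congrArg natDegree hprop
  rwa [natDegree_mul_C (right_ne_zero_of_mul hn₀), natDegree_mul_C (left_ne_zero_of_mul hn₀)]
    at this

end FunctionalEquation

section Commuting

variable (hq : IsFreeType q) {x y z : qHeis K q}
include hq

lemma leadExp_snd_eq_of_commute (hxy : Commute x y) (hx : x ≠ 0) (hy : y ≠ 0)
    (hN : (leadExp (bandData hq x)).1 = (leadExp (bandData hq y)).1)
    (hN0 : (leadExp (bandData hq x)).1 ≠ 0) :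
    (leadExp (bandData hq x)).2 = (leadExp (bandData hq y)).2 := by
  have hx' := bandData_ne_zero hq hx
  have hy' := bandData_ne_zero hq hy
  have h : bandMul q (bandData hq x) (bandData hq y) =
      bandMul q (bandData hq y) (bandData hq x) := by
    rw [← bandData_mul, ← bandData_mul, hxy.eq]
  have h2 := DFunLike.congr_fun h (topBand (bandData hq x) + topBand (bandData hq y))
  rw [bandMul_apply_topBand_add hx' hy', add_comm, bandMul_apply_topBand_add hy' hx'] at h2
  rw [leadExp_fst, leadExp_fst] at hN
  rw [leadExp_fst] at hN0
  rw [show qShift q (topBand (bandData hq y)) = qShift q (topBand (bandData hq x)) by rw [hN]] at h2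
  rw [leadExp_snd, leadExp_snd]
  exact (natDegree_eq_of_mul_comp_qShift hq (apply_topBand_ne_zero hy') (apply_topBand_ne_zero hx')
    hN0 h2).symm

lemma leadExp_snd_eq_zero_of_commute (hxz : Commute x z) (hx : x ≠ 0) (hz : z ≠ 0)
    (hz0 : (leadExp (bandData hq z)).1 = 0) (hx0 : (leadExp (bandData hq x)).1 ≠ 0) :
    (leadExp (bandData hq z)).2 = 0 := by
  have := noZeroDivisors hq
  have hlead := leadExp_bandData_mul hq hx hz
  have h := leadExp_snd_eq_of_commute hq ((Commute.refl x).mul_left hxz.symm) (mul_ne_zero hx hz)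
    hx (by simp [hlead, hz0]) (by simpa [hlead, hz0] using hx0)
  simpa [hlead] using h

lemma leadExp_proportional_of_commute_of_ne_zero (hxy : Commute x y) (hx : x ≠ 0) (hy : y ≠ 0)
    {s s' : ℤ} {d d' : ℕ} (hxs : leadExp (bandData hq x) = (s, d))
    (hys : leadExp (bandData hq y) = (s', d')) (hs : s ≠ 0) (hs' : s' ≠ 0) : s * d' = s' * d := by
  have := noZeroDivisors hq
  have hX := leadExp_bandData_pow hq hx s'.natAbs
  have hY := leadExp_bandData_pow hq hy s.natAbs
  rw [hxs] at hX
  rw [hys] at hY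
  have hsign : |s'| * s = |s| * s' ∨ |s'| * s + |s| * s' = 0 := by
    rcases abs_choice s with h | h <;> rcases abs_choice s' with h' | h' <;> rw [h, h'] <;>
      first | (left; ring1) | (right; ring1)
  rcases hsign with hsame | hopp
  · -- `x ^ |s'|` and `y ^ |s|` have the same nonzero top band
    have h := leadExp_snd_eq_of_commute hq (hxy.pow_pow s'.natAbs s.natAbs)
      (pow_ne_zero _ hx) (pow_ne_zero _ hy) (by simp [hX, hY, hsame]) (by simp [hX, hs, hs'])
    simp only [hX, hY, Prod.smul_mk, smul_eq_mul] at h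
    have h' : |s'| * (d : ℤ) = |s| * d' := by simpa using congrArg (fun n : ℕ => (n : ℤ)) h
    refine mul_left_cancel₀ (abs_ne_zero.mpr hs) ?_
    linear_combination (d : ℤ) * hsame - s * h'
  · -- `x` commutes with `x ^ |s'| * y ^ |s|`, whose top band is `0`
    have hXY := leadExp_bandData_mul hq (pow_ne_zero s'.natAbs hx) (pow_ne_zero s.natAbs hy)
    have h := leadExp_snd_eq_zero_of_commute hq
      (((Commute.refl x).pow_right s'.natAbs).mul_right (hxy.pow_right s.natAbs)) hx
      (mul_ne_zero (pow_ne_zero _ hx) (pow_ne_zero _ hy)) (by simp [hXY, hX, hY, hopp])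
      (by rw [hxs]; exact hs)
    have hdd : d = 0 ∧ d' = 0 := by simpa [hXY, hX, hY, hs, hs'] using h
    simp [hdd]

theorem leadExp_proportional_of_commute (hxy : Commute x y) (hx : x ≠ 0) (hy : y ≠ 0) :
    (leadExp (bandData hq x)).1 * ((leadExp (bandData hq y)).2 : ℤ) =
      (leadExp (bandData hq y)).1 * (leadExp (bandData hq x)).2 := by
  obtain ⟨⟨s, d⟩, hxs⟩ : ∃ p, leadExp (bandData hq x) = p := ⟨_, rfl⟩
  obtain ⟨⟨s', d'⟩, hys⟩ : ∃ p, leadExp (bandData hq y) = p := ⟨_, rfl⟩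
  rw [hxs, hys]
  rcases eq_or_ne s 0 with hs | hs
  · rcases eq_or_ne s' 0 with hs' | hs'
    · simp [hs, hs']
    · have hd : d = 0 := by
        simpa [hxs] using leadExp_snd_eq_zero_of_commute hq hxy.symm hy hx (by rw [hxs, hs])
          (by rw [hys]; exact hs')
      simp [hs, hd]
  rcases eq_or_ne s' 0 with hs' | hs'
  · have hd' : d' = 0 := by
      simpa [hys] using leadExp_snd_eq_zero_of_commute hq hxy hx hy (by rw [hys, hs'])
        (by rw [hxs]; exact hs)
    simp [hs', hd']
  exact leadExp_proportional_of_commute_of_ne_zero hq hxy hx hy hxs hys hs hs'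

end Commuting

lemma commute_of_mem_adjoin_pair {A : Type*} [Ring A] [Algebra K A] {P Q w w' : A}
    (hPQ : Commute P Q) (hw : w ∈ Algebra.adjoin K {P, Q}) (hw' : w' ∈ Algebra.adjoin K {P, Q}) :
    Commute w w' := by
  have hgen : ∀ b ∈ ({P, Q} : Set A), ∀ c ∈ ({P, Q} : Set A), Commute b c := by
    simp [hPQ, hPQ.symm]
  refine Algebra.commute_of_mem_adjoin_of_forall_mem_commute hw' fun b hb => ?_
  exact (Algebra.commute_of_mem_adjoin_of_forall_mem_commute hw (hgen b hb)).symm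

theorem finrank_le_of_pairwise_commute (hq : IsFreeType q) {S : Submodule K (qHeis K q)}
    (hcomm : ∀ w ∈ S, ∀ w' ∈ S, Commute w w') {B : ℕ} (hbox : S.map (bandData hq) ≤ bandBox B) :
    finrank K S ≤ 2 * B + 1 := by
  classical
  set W := S.map (bandData hq)
  let Γ := (Finset.Icc (-(B : ℤ)) B ×ˢ Finset.Iic B).filter
    fun γ => ∃ D ∈ W, D ≠ 0 ∧ leadExp D = γ
  calc finrank K S = finrank K W :=
        (Submodule.equivMapOfInjective _ (bandData_injective hq) S).finrank_eq
    _ ≤ Γ.card := finrank_le_card_of_leadExp_mem fun D hD h0 =>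
        Finset.mem_filter.mpr ⟨leadExp_mem_of_mem_bandBox (hbox hD) h0, D, hD, h0, rfl⟩
    _ ≤ 2 * B + 1 := by
      refine card_le_of_pairwise_proportional B (Finset.filter_subset _ _) fun γ hγ γ' hγ' => ?_
      obtain ⟨-, D, hD, hD0, rfl⟩ := Finset.mem_filter.mp hγ
      obtain ⟨-, D', hD', hD'0, rfl⟩ := Finset.mem_filter.mp hγ'
      obtain ⟨w, hw, rfl⟩ := Submodule.mem_map.mp hD
      obtain ⟨w', hw', rfl⟩ := Submodule.mem_map.mp hD'
      exact leadExp_proportional_of_commute hq (hcomm w hw w' hw')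
        (fun h => hD0 (by rw [h, map_zero])) (fun h => hD'0 (by rw [h, map_zero]))

theorem not_linearIndependent_pow_mul_pow (hq : IsFreeType q) {P Q : qHeis K q}
    (hPQ : Commute P Q) : ¬ LinearIndependent K fun p : ℕ × ℕ => P ^ p.1 * Q ^ p.2 := by
  intro hLI
  obtain ⟨a, hPa, hQa⟩ : ∃ a, bandData hq P ∈ bandBox a ∧ bandData hq Q ∈ bandBox a := by
    obtain ⟨a₁, ha₁⟩ := exists_mem_bandBox (bandData hq P)
    obtain ⟨a₂, ha₂⟩ := exists_mem_bandBox (bandData hq Q)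
    exact ⟨max a₁ a₂, bandBox_mono (le_max_left _ _) ha₁, bandBox_mono (le_max_right _ _) ha₂⟩
  -- `M` is chosen so that `(M + 1) ^ 2 > 2 * (2 * M * a) + 1`
  obtain ⟨M, hM⟩ : ∃ M, M = 4 * a + 1 := ⟨_, rfl⟩
  let box : Fin (M + 1) × Fin (M + 1) → ℕ × ℕ := fun p => (p.1, p.2)
  let mon := (fun p : ℕ × ℕ => P ^ p.1 * Q ^ p.2) ∘ box
  have hmon : LinearIndependent K mon :=
    hLI.comp box fun p p' h => by simpa [box, Prod.ext_iff, Fin.val_inj] using h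
  have hbox : (Submodule.span K (Set.range mon)).map (bandData hq) ≤ bandBox (2 * M * a) := by
    refine Submodule.map_le_iff_le_comap.mpr (Submodule.span_le.mpr ?_)
    rintro _ ⟨⟨i, j⟩, rfl⟩
    show bandData hq (P ^ (i : ℕ) * Q ^ (j : ℕ)) ∈ bandBox (2 * M * a)
    rw [bandData_mul]
    refine bandBox_mono ?_ (bandMul_mem_bandBox hq.1 (bandData_pow_mem_bandBox hq hPa i)
      (bandData_pow_mem_bandBox hq hQa j))
    nlinarith [i.is_lt, j.is_lt]
  have hcomm : ∀ w ∈ Submodule.span K (Set.range mon), ∀ w' ∈ Submodule.span K (Set.range mon),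
      Commute w w' := by
    have hadjoin : Submodule.span K (Set.range mon) ≤
        Subalgebra.toSubmodule (Algebra.adjoin K {P, Q}) := by
      refine Submodule.span_le.mpr ?_
      rintro _ ⟨p, rfl⟩
      rw [SetLike.mem_coe, Subalgebra.mem_toSubmodule]
      exact mul_mem (pow_mem (Algebra.subset_adjoin (by simp)) _)
        (pow_mem (Algebra.subset_adjoin (by simp)) _)
    exact fun w hw w' hw' => commute_of_mem_adjoin_pair hPQ (hadjoin hw) (hadjoin hw')
  have hdim := finrank_le_of_pairwise_commute hq hcomm hbox
  rw [finrank_span_eq_card hmon, Fintype.card_prod, Fintype.card_fin, hM] at hdim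
  nlinarith

end QHeis

/-- **Hellström–Silvestrov (free type case).** Let `K` be a field and let `q ∈ K` be of
free type, i.e. `q ≠ 0` and `{n}_q ≠ 0` for every nonzero integer `n`. If `P` and `Q` are
commuting elements of the `q`-deformed Heisenberg algebra `H_q`, then there is a nonzero
bivariate polynomial `F(x,y)` over `K` with `F(P,Q) = 0` in `H_q`. -/
theorem algebraic_dependence_qHeis_free_type
    {K : Type*} [Field K] (q : K) (hq : q ≠ 0)
    (hfree : ∀ n : ℤ, n ≠ 0 → qInt K q n ≠ 0)
    (P Q : qHeis K q) (hPQ : P * Q = Q * P) :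
    ∃ F : MvPolynomial (Fin 2) K, F ≠ 0 ∧
      (F.support.sum fun d => F.coeff d • (P ^ d 0 * Q ^ d 1)) = 0 := by
  have hdep : ¬ LinearIndependent K fun d : Fin 2 →₀ ℕ => P ^ d 0 * Q ^ d 1 := fun h =>
    QHeis.not_linearIndependent_pow_mul_pow ⟨hq, hfree⟩ hPQ <| by
      have he := Finsupp.equivFunOnFinite.symm.injective.comp (finTwoArrowEquiv ℕ).symm.injective
      convert h.comp _ he
      simp
  rw [linearIndependent_iff] at hdep
  push Not at hdep
  obtain ⟨l, hl, hl0⟩ := hdep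
  exact ⟨AddMonoidAlgebra.ofCoeff l, fun h => hl0 (congrArg AddMonoidAlgebra.coeff h), hl⟩
end
end

section
/- Let K be a field and let q ∈ K, q ≠ 1, be a root of unity of multiplicative order p (i.e., p is the smallest positive integer with q^p = 1). Then in the q-deformed Heisenberg algebra H_q over K, the elements α = A^p and β = B^p commute, but they satisfy no nontrivial commutative polynomial relation over K: for every nonzero bivariate polynomial F(x,y) with coefficients in K, F(A^p, B^p) ≠ 0 in H_q. -/
/-!
Since `AB = qBA + 1`, induction gives `AᵖB = qᵖBAᵖ + (1 + q + ⋯ + qᵖ⁻¹)Aᵖ⁻¹`. When `q ≠ 1` is a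
`p`-th root of unity, `qᵖ = 1` and the geometric sum vanishes, so `Aᵖ` commutes with `B`.
For independence, let `H_q` act on `K[x, z]` by `B = x` and `A = z·σ + ∂`, where `σ xⁱ = qⁱxⁱ`
and `∂ xⁱ = (1 + q + ⋯ + qⁱ⁻¹)xⁱ⁻¹` is the `q`-derivative in `x`. On `x^{pk} zʲ` the operator `A`
is just multiplication by `z`, so `F(Aᵖ, Bᵖ)·1 = F(zᵖ, xᵖ)`, which is nonzero for `F ≠ 0`.
-/

noncomputable section

open Finset

theorem geom_sum_eq_zero_of_pow_eq_one {R : Type*} [Ring R] [NoZeroDivisors R] {q : R}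
    (hq1 : q ≠ 1) {n : ℕ} (hqn : q ^ n = 1) : ∑ k ∈ range n, q ^ k = 0 := by
  have h : (∑ k ∈ range n, q ^ k) * (q - 1) = 0 := by rw [geom_sum_mul, hqn, sub_self]
  exact (mul_eq_zero.1 h).resolve_right (sub_ne_zero.2 hq1)

section QCommutation

variable {K R : Type*} [CommRing K] [Ring R] [Algebra K R] {q : K} {a b : R}

theorem pow_succ_mul_of_mul_eq_smul_add_one (h : a * b = q • (b * a) + 1) (n : ℕ) :
    a ^ (n + 1) * b =
      q ^ (n + 1) • (b * a ^ (n + 1)) + (∑ k ∈ range (n + 1), q ^ k) • a ^ n := by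
  induction n with
  | zero => simpa using h
  | succ n ih =>
    calc a ^ (n + 2) * b = a * (a ^ (n + 1) * b) := by rw [← mul_assoc, ← pow_succ']
      _ = q ^ (n + 1) • ((a * b) * a ^ (n + 1)) + (∑ k ∈ range (n + 1), q ^ k) • a ^ (n + 1) := by
        rw [ih, mul_add, mul_smul_comm, mul_smul_comm, ← mul_assoc, ← pow_succ']
      _ = _ := by
        rw [h, add_mul, smul_mul_assoc, one_mul, mul_assoc, ← pow_succ',
          sum_range_succ (q ^ ·) (n + 1)]
        module

theorem commute_pow_of_mul_eq_smul_add_one [IsDomain K] (h : a * b = q • (b * a) + 1)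
    (hq1 : q ≠ 1) {p : ℕ} (hqp : q ^ p = 1) : Commute (a ^ p) b := by
  cases p with
  | zero => rw [pow_zero]; exact Commute.one_left b
  | succ n =>
    simpa [Commute, SemiconjBy, hqp, geom_sum_eq_zero_of_pow_eq_one hq1 hqp] using
      pow_succ_mul_of_mul_eq_smul_add_one h n

end QCommutation

theorem qA_mul_qB (K : Type*) [Field K] (q : K) : qA K q * qB K q = q • (qB K q * qA K q) + 1 := by
  simpa only [qA, qB, map_mul, map_add, map_smul, map_one] using
    RingQuot.mkAlgHom_rel K (qHeisRel.rel (K := K) (q := q))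

section Representation

variable {K : Type*} [Field K]

open Finsupp

-- `single (i, j) 1` stands for `xⁱzʲ`; at `i = 0` the truncated `i - 1` in `qHeisOpA` is harmless,
-- its coefficient being the empty sum.
def qHeisOpB : ((ℕ × ℕ) →₀ K) →ₗ[K] (ℕ × ℕ) →₀ K :=
  linearCombination K fun ij => single (ij.1 + 1, ij.2) 1

def qHeisOpA (q : K) : ((ℕ × ℕ) →₀ K) →ₗ[K] (ℕ × ℕ) →₀ K :=
  linearCombination K fun ij =>
    q ^ ij.1 • single (ij.1, ij.2 + 1) 1 + (∑ k ∈ range ij.1, q ^ k) • single (ij.1 - 1, ij.2) 1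

theorem qHeisOpB_single (i j : ℕ) :
    qHeisOpB (single (i, j) 1 : (ℕ × ℕ) →₀ K) = single (i + 1, j) 1 := by
  simp [qHeisOpB]

theorem qHeisOpA_single (q : K) (i j : ℕ) :
    qHeisOpA q (single (i, j) 1) =
      q ^ i • single (i, j + 1) 1 + (∑ k ∈ range i, q ^ k) • single (i - 1, j) 1 := by
  simp [qHeisOpA]

theorem qHeisOpA_mul_qHeisOpB (q : K) :
    qHeisOpA q * qHeisOpB = q • (qHeisOpB * qHeisOpA q) + 1 := by
  refine (Finsupp.basisSingleOne (R := K)).ext fun ⟨i, j⟩ => ?_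
  simp only [Finsupp.coe_basisSingleOne, Module.End.mul_apply, LinearMap.add_apply,
    LinearMap.smul_apply, Module.End.one_apply, qHeisOpB_single, qHeisOpA_single, map_add,
    map_smul, geom_sum_succ]
  cases i with
  | zero => simp
  | succ i =>
    simp only [Nat.add_sub_cancel]
    module

theorem qHeisOpB_pow_single (n i j : ℕ) :
    (qHeisOpB ^ n) (single (i, j) 1 : (ℕ × ℕ) →₀ K) = single (i + n, j) 1 := by
  induction n with
  | zero => simp
  | succ n ih => rw [pow_succ', Module.End.mul_apply, ih, qHeisOpB_single, add_assoc]

theorem qHeisOpA_pow_single {q : K} (hq1 : q ≠ 1) {i : ℕ} (hqi : q ^ i = 1) (n j : ℕ) :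
    (qHeisOpA q ^ n) (single (i, j) 1) = single (i, j + n) 1 := by
  induction n with
  | zero => simp
  | succ n ih =>
    rw [pow_succ', Module.End.mul_apply, ih, qHeisOpA_single, hqi,
      geom_sum_eq_zero_of_pow_eq_one hq1 hqi, one_smul, zero_smul, add_zero, add_assoc]

def qHeisRep (q : K) : qHeis K q →ₐ[K] Module.End K ((ℕ × ℕ) →₀ K) :=
  RingQuot.liftAlgHom K ⟨FreeAlgebra.lift K ![qHeisOpA q, qHeisOpB], by
    rintro _ _ ⟨⟩
    simpa using qHeisOpA_mul_qHeisOpB q⟩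

theorem qHeisRep_qA (q : K) : qHeisRep q (qA K q) = qHeisOpA q := by
  simp [qHeisRep, qA]

theorem qHeisRep_qB (q : K) : qHeisRep q (qB K q) = qHeisOpB := by
  simp [qHeisRep, qB]

theorem qHeisRep_pow_mul_pow_apply_single_zero {q : K} (hq1 : q ≠ 1) {p : ℕ} (hqp : q ^ p = 1)
    (i j : ℕ) :
    qHeisRep q ((qA K q ^ p) ^ i * (qB K q ^ p) ^ j) (single (0, 0) 1) =
      single (p * j, p * i) 1 := by
  have hqpj : q ^ (p * j) = 1 := by rw [pow_mul, hqp, one_pow]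
  rw [map_mul, map_pow, map_pow, map_pow, map_pow, qHeisRep_qA, qHeisRep_qB, ← pow_mul, ← pow_mul,
    Module.End.mul_apply, qHeisOpB_pow_single, qHeisOpA_pow_single hq1 (by rwa [zero_add]),
    zero_add, zero_add]

end Representation

theorem qHeis_torsion_no_algebraic_relation_over_field_general
    {K : Type*} [Field K] (q : K) (hq1 : q ≠ 1)
    (p : ℕ) (hp : 0 < p) (hqp : q ^ p = 1) :
    qA K q ^ p * qB K q ^ p = qB K q ^ p * qA K q ^ p ∧
    ∀ F : MvPolynomial (Fin 2) K, F ≠ 0 →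
      (F.support.sum fun d => F.coeff d • ((qA K q ^ p) ^ d 0 * (qB K q ^ p) ^ d 1)) ≠ 0 := by
  refine ⟨((commute_pow_of_mul_eq_smul_add_one (qA_mul_qB K q) hq1 hqp).pow_right p).eq,
    fun F hF hF0 => ?_⟩
  have hinj : Function.Injective fun d : Fin 2 →₀ ℕ => (p * d 1, p * d 0) := by
    intro d d' h
    simp only [Prod.mk.injEq, mul_right_inj' hp.ne'] at h
    ext i
    fin_cases i <;> simp [h]
  have hind : LinearIndependent K fun d : Fin 2 →₀ ℕ =>
      (Finsupp.single (p * d 1, p * d 0) 1 : (ℕ × ℕ) →₀ K) :=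
    (Finsupp.linearIndependent_single_one K _).comp _ hinj
  have hsum : ∑ d ∈ F.support, F.coeff d • (Finsupp.single (p * d 1, p * d 0) 1 : (ℕ × ℕ) →₀ K)
      = 0 := by
    simpa only [map_sum, map_smul, map_zero, LinearMap.sum_apply,
      LinearMap.smul_apply, LinearMap.zero_apply,
      qHeisRep_pow_mul_pow_apply_single_zero hq1 hqp] using
      congr(qHeisRep q $hF0 (Finsupp.single (0, 0) 1))
  obtain ⟨d, hd⟩ := MvPolynomial.ne_zero_iff.1 hF
  exact hd (linearIndependent_iff'.1 hind _ _ hsum d (MvPolynomial.mem_support_iff.2 hd))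

/-- If `q ≠ 1` is a root of unity of multiplicative order `p`, then in the `q`-deformed
Heisenberg algebra the elements `α = A^p` and `β = B^p` commute, but satisfy no nontrivial
polynomial relation over `K`: for every nonzero bivariate polynomial `F(x,y)` over `K` one
has `F(A^p, B^p) ≠ 0` in `H_q`. -/
theorem qHeis_torsion_no_algebraic_relation_over_field
    {K : Type*} [Field K] (q : K) (hq0 : q ≠ 0) (hq1 : q ≠ 1)
    (p : ℕ) (hp : 0 < p) (hqp : q ^ p = 1)
    (hmin : ∀ k : ℕ, 0 < k → k < p → q ^ k ≠ 1) :
    qA K q ^ p * qB K q ^ p = qB K q ^ p * qA K q ^ p ∧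
    ∀ F : MvPolynomial (Fin 2) K, F ≠ 0 →
      (F.support.sum fun d => F.coeff d • ((qA K q ^ p) ^ d 0 * (qB K q ^ p) ^ d 1)) ≠ 0 :=
  qHeis_torsion_no_algebraic_relation_over_field_general q hq1 p hp hqp
end
end

section
/- Let K be a field and let q ∈ K, q ≠ 1, be a root of unity of multiplicative order d (i.e., d is the smallest positive integer with q^d = 1). Then the center of the q-deformed Heisenberg algebra H_q over K equals the K-subalgebra generated by A^d and B^d: Z(H_q) = K[A^d, B^d]. -/
/-!
The monomials `Bⁱ Aʲ` form a `K`-basis of `H_q`. They span because right multiplication by `A`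
or `B` keeps their span stable, and they are independent because in the left regular
representation on `(ℕ × ℕ) →₀ K` the monomial `Bⁱ Aʲ` sends `e₀₀` to `eᵢⱼ`.

If `z = ∑ c(i,j) Bⁱ Aʲ` is central, the coefficient of `Bᵃ Aᵇ⁺¹` in `Az - zA = 0` gives
`(qᵃ - 1) c(a,b) + {a+1}_q c(a+1,b+1) = 0`, and `zB - Bz = 0` gives the same relation with the
two coordinates swapped. As `{a+1}_q = 0` exactly when `qᵃ⁺¹ = 1`, a downward induction on `a`
(the support of `c` is finite) shows that `c(a,b) = 0` unless `qᵃ = 1` and `qᵇ = 1`, i.e. unless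
both exponents are multiples of the order `d` of `q`. Conversely `Aᵈ` and `Bᵈ` are central because
`Aᵈ B = qᵈ B Aᵈ + {d}_q Aᵈ⁻¹` and `{d}_q = 0`.
-/

noncomputable section

section

variable {K : Type*} [Field K] {q : K}

theorem qInt_zero : qInt K q 0 = 0 := by
  unfold qInt; split_ifs <;> simp

theorem qInt_natCast_succ (n : ℕ) : qInt K q (n + 1 : ℕ) = q * qInt K q n + 1 := by
  by_cases hq : q = 1
  · simp [qInt, hq]
  · have : q - 1 ≠ 0 := sub_ne_zero.2 hq
    rw [qInt, qInt, if_neg hq, if_neg hq, zpow_natCast, zpow_natCast]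
    field_simp
    ring

theorem qInt_one : qInt K q 1 = 1 := by
  simpa [qInt_zero] using qInt_natCast_succ (q := q) 0

theorem qInt_natCast_eq_zero_iff (hq1 : q ≠ 1) (n : ℕ) : qInt K q n = 0 ↔ q ^ n = 1 := by
  rw [qInt, if_neg hq1, div_eq_zero_iff, zpow_natCast, sub_eq_zero, or_iff_left]
  exact sub_ne_zero.2 hq1

section QCommute

open MulOpposite

variable {R : Type*} [Ring R] [Algebra K R] {a b : R} (hab : a * b = q • (b * a) + 1)
include hab

theorem mul_pow_succ_of_mul_eq (n : ℕ) :
    a * b ^ (n + 1) = q ^ (n + 1) • (b ^ (n + 1) * a) + qInt K q (n + 1 : ℕ) • b ^ n := by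
  induction n with
  | zero => simpa [qInt_one] using hab
  | succ n ih =>
    rw [pow_succ' b (n + 1), ← mul_assoc, hab, add_mul, one_mul, smul_mul_assoc, mul_assoc, ih,
      mul_add, mul_smul_comm, mul_smul_comm, ← mul_assoc b, ← pow_succ', ← pow_succ',
      qInt_natCast_succ (n + 1)]
    module

theorem pow_succ_mul_of_mul_eq (n : ℕ) :
    a ^ (n + 1) * b = q ^ (n + 1) • (b * a ^ (n + 1)) + qInt K q (n + 1 : ℕ) • a ^ n := by
  -- in the opposite ring the pair `(op b, op a)` satisfies the same relation
  have hop : op b * op a = q • (op a * op b) + 1 := by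
    rw [← op_mul, hab, op_add, op_smul, op_one, op_mul]
  simpa using congrArg unop (mul_pow_succ_of_mul_eq hop n)

end QCommute

theorem eq_zero_of_pow_ne_one_of_rel (hq1 : q ≠ 1) {f : ℕ → ℕ → K} {N : ℕ}
    (hN : ∀ a b, N ≤ a → f a b = 0)
    (hrel : ∀ a b, (q ^ a - 1) * f a b + qInt K q (a + 1 : ℕ) * f (a + 1) (b + 1) = 0)
    {a : ℕ} (ha : q ^ a ≠ 1) (b : ℕ) : f a b = 0 := by
  induction h : N - a generalizing a b with
  | zero => exact hN a b (by omega)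
  | succ k ih =>
    have hnext : qInt K q (a + 1 : ℕ) * f (a + 1) (b + 1) = 0 := by
      by_cases ha1 : q ^ (a + 1) = 1
      · rw [(qInt_natCast_eq_zero_iff hq1 _).2 ha1, zero_mul]
      · rw [ih ha1 (b + 1) (by omega), mul_zero]
    have := hrel a b
    rw [hnext, add_zero] at this
    exact (mul_eq_zero.1 this).resolve_left (sub_ne_zero.2 ha)

namespace qHeis

open Finsupp Module

section Generators

variable (K q)

theorem qA_mul_qB : qA K q * qB K q = q • (qB K q * qA K q) + 1 := by
  simpa only [qA, qB, map_mul, map_add, map_smul, map_one] using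
    RingQuot.mkAlgHom_rel K (qHeisRel.rel (K := K) (q := q))

theorem adjoin_qA_qB : Algebra.adjoin K {qA K q, qB K q} = ⊤ := by
  rw [eq_top_iff]
  rintro x -
  obtain ⟨y, rfl⟩ := RingQuot.mkAlgHom_surjective K (qHeisRel K q) x
  induction y using FreeAlgebra.induction with
  | grade0 r => simpa only [AlgHom.commutes] using Subalgebra.algebraMap_mem _ r
  | grade1 i =>
    fin_cases i
    · exact Algebra.subset_adjoin (Set.mem_insert _ _)
    · exact Algebra.subset_adjoin (Set.mem_insert_of_mem _ rfl)
  | mul a b ha hb => rw [map_mul]; exact mul_mem ha hb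
  | add a b ha hb => rw [map_add]; exact add_mem ha hb

end Generators

theorem mem_center_of_commute {z : qHeis K q} (hA : Commute (qA K q) z)
    (hB : Commute (qB K q) z) : z ∈ Subalgebra.center K (qHeis K q) := by
  have hz : z ∈ Subalgebra.centralizer K {qA K q, qB K q} := by
    simpa [Subalgebra.mem_centralizer_iff] using ⟨hA.eq, hB.eq⟩
  refine Subalgebra.mem_center_iff.2 fun g => ?_
  have hg : g ∈ Algebra.adjoin K {qA K q, qB K q} := adjoin_qA_qB K q ▸ Algebra.mem_top
  exact (Algebra.adjoin_le_centralizer_centralizer K _ hg z hz).symm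

theorem qA_pow_mem_center (hq1 : q ≠ 1) {n : ℕ} (hn : q ^ n = 1) :
    qA K q ^ n ∈ Subalgebra.center K (qHeis K q) := by
  refine mem_center_of_commute (Commute.self_pow _ _) ?_
  obtain _ | n := n
  · simp
  rw [commute_iff_eq, pow_succ_mul_of_mul_eq (qA_mul_qB K q), hn,
    (qInt_natCast_eq_zero_iff hq1 _).2 hn, one_smul, zero_smul, add_zero]

theorem qB_pow_mem_center (hq1 : q ≠ 1) {n : ℕ} (hn : q ^ n = 1) :
    qB K q ^ n ∈ Subalgebra.center K (qHeis K q) := by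
  refine mem_center_of_commute ?_ (Commute.self_pow _ _)
  obtain _ | n := n
  · simp
  rw [commute_iff_eq, mul_pow_succ_of_mul_eq (qA_mul_qB K q), hn,
    (qInt_natCast_eq_zero_iff hq1 _).2 hn, one_smul, zero_smul, add_zero]

/- `opA` and `opB` are left multiplication by `A` and `B` written in the basis `Bⁱ Aʲ ↦ eᵢⱼ`;
the truncated index `p.1 - 1` only occurs with the coefficient `qInt K q 0 = 0`. -/
variable (K q) in
def opA : ((ℕ × ℕ) →₀ K) →ₗ[K] (ℕ × ℕ) →₀ K :=
  linearCombination K fun p =>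
    q ^ p.1 • single (p.1, p.2 + 1) 1 + qInt K q p.1 • single (p.1 - 1, p.2) 1

variable (K) in
def opB : ((ℕ × ℕ) →₀ K) →ₗ[K] (ℕ × ℕ) →₀ K :=
  lmapDomain K K fun p => (p.1 + 1, p.2)

theorem opA_single (p : ℕ × ℕ) :
    opA K q (single p 1) =
      q ^ p.1 • single (p.1, p.2 + 1) 1 + qInt K q p.1 • single (p.1 - 1, p.2) 1 := by
  rw [opA, linearCombination_single, one_smul]

theorem opB_single (p : ℕ × ℕ) : opB K (single p (1 : K)) = single (p.1 + 1, p.2) 1 := by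
  rw [opB, lmapDomain_apply, mapDomain_single]

theorem opA_mul_opB : opA K q * opB K = q • (opB K * opA K q) + 1 := by
  refine Finsupp.basisSingleOne.ext fun ⟨i, j⟩ => ?_
  simp only [coe_basisSingleOne, Module.End.mul_apply, LinearMap.add_apply, LinearMap.smul_apply,
    Module.End.one_apply, opB_single, opA_single, map_add, map_smul, add_tsub_cancel_right]
  obtain _ | i := i
  · rw [qInt_natCast_succ 0, Nat.cast_zero, qInt_zero, zero_smul]
    module
  · rw [Nat.add_sub_cancel, qInt_natCast_succ (i + 1)]
    module

variable (K q) in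
def regularRep : qHeis K q →ₐ[K] Module.End K ((ℕ × ℕ) →₀ K) :=
  RingQuot.liftAlgHom K ⟨FreeAlgebra.lift K ![opA K q, opB K], by
    rintro _ _ ⟨⟩
    simpa only [map_mul, map_add, map_smul, map_one, FreeAlgebra.lift_ι_apply,
      Matrix.cons_val_zero, Matrix.cons_val_one] using opA_mul_opB⟩

theorem regularRep_qA : regularRep K q (qA K q) = opA K q := by
  rw [qA, regularRep, RingQuot.liftAlgHom_mkAlgHom_apply, FreeAlgebra.lift_ι_apply]
  rfl

theorem regularRep_qB : regularRep K q (qB K q) = opB K := by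
  rw [qB, regularRep, RingQuot.liftAlgHom_mkAlgHom_apply, FreeAlgebra.lift_ι_apply]
  rfl

variable (K q) in
def monomial (p : ℕ × ℕ) : qHeis K q := qB K q ^ p.1 * qA K q ^ p.2

theorem opA_pow_single_zero (j : ℕ) : (opA K q ^ j) (single (0, 0) 1) = single (0, j) 1 := by
  induction j with
  | zero => rfl
  | succ j ih =>
    rw [pow_succ', Module.End.mul_apply, ih, opA_single, Nat.cast_zero, qInt_zero, zero_smul,
      add_zero, pow_zero, one_smul]

theorem opB_pow_single (i j : ℕ) : (opB K ^ i) (single (0, j) (1 : K)) = single (i, j) 1 := by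
  induction i with
  | zero => rfl
  | succ i ih => rw [pow_succ', Module.End.mul_apply, ih, opB_single]

theorem regularRep_monomial (p : ℕ × ℕ) :
    regularRep K q (monomial K q p) (single (0, 0) 1) = single p 1 := by
  rw [monomial, map_mul, map_pow, map_pow, regularRep_qA, regularRep_qB, Module.End.mul_apply,
    opA_pow_single_zero, opB_pow_single]

theorem linearIndependent_monomial : LinearIndependent K (monomial K q) :=
  LinearIndependent.of_comp
    (LinearMap.applyₗ (single (0, 0) 1) ∘ₗ (regularRep K q).toLinearMap) <| by
      convert linearIndependent_single_one K (ℕ × ℕ) with p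
      exact regularRep_monomial p

variable (K q) in
theorem monomial_mul_qA (p : ℕ × ℕ) :
    monomial K q p * qA K q = monomial K q (p.1, p.2 + 1) := by
  rw [monomial, monomial, mul_assoc, ← pow_succ]

theorem monomial_mul_qB (p : ℕ × ℕ) :
    monomial K q p * qB K q =
      q ^ p.2 • monomial K q (p.1 + 1, p.2) + qInt K q p.2 • monomial K q (p.1, p.2 - 1) := by
  obtain ⟨i, _ | j⟩ := p
  · simp [monomial, qInt_zero, pow_succ]
  · rw [monomial, mul_assoc, pow_succ_mul_of_mul_eq (qA_mul_qB K q), mul_add, mul_smul_comm,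
      mul_smul_comm, ← mul_assoc, ← pow_succ]
    rfl

variable (K q) in
theorem qB_mul_monomial (p : ℕ × ℕ) :
    qB K q * monomial K q p = monomial K q (p.1 + 1, p.2) := by
  rw [monomial, monomial, ← mul_assoc, ← pow_succ']

theorem qA_mul_monomial (p : ℕ × ℕ) :
    qA K q * monomial K q p =
      q ^ p.1 • monomial K q (p.1, p.2 + 1) + qInt K q p.1 • monomial K q (p.1 - 1, p.2) := by
  obtain ⟨_ | i, j⟩ := p
  · simp [monomial, qInt_zero, pow_succ']
  · rw [monomial, ← mul_assoc, mul_pow_succ_of_mul_eq (qA_mul_qB K q), add_mul, smul_mul_assoc,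
      smul_mul_assoc, mul_assoc, ← pow_succ']
    rfl

theorem span_monomial : ⊤ ≤ Submodule.span K (Set.range (monomial K q)) := by
  set M := Submodule.span K (Set.range (monomial K q))
  have hmem : ∀ p, monomial K q p ∈ M := fun p => Submodule.subset_span (Set.mem_range_self p)
  have hM : ∀ x, (∀ p, monomial K q p * x ∈ M) → ∀ m ∈ M, m * x ∈ M := fun x hx m hm =>
    (Submodule.span_le (p := M.comap (LinearMap.mulRight K x))).2 (Set.range_subset_iff.2 hx) hm
  have hstable : ∀ x : qHeis K q, ∀ m ∈ M, m * x ∈ M := by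
    intro x
    induction (adjoin_qA_qB K q ▸ Algebra.mem_top : x ∈ Algebra.adjoin K {qA K q, qB K q})
      using Algebra.adjoin_induction with
    | mem x hx =>
      rcases hx with rfl | rfl
      · exact hM _ fun p => monomial_mul_qA K q p ▸ hmem _
      · refine hM _ fun p => ?_
        rw [monomial_mul_qB]
        exact add_mem (M.smul_mem _ (hmem _)) (M.smul_mem _ (hmem _))
    | algebraMap r =>
      intro m hm
      rw [← Algebra.commutes, ← Algebra.smul_def]
      exact M.smul_mem r hm
    | add x y _ _ hx hy => exact fun m hm => mul_add m x y ▸ add_mem (hx m hm) (hy m hm)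
    | mul x y _ _ hx hy => exact fun m hm => mul_assoc m x y ▸ hy _ (hx m hm)
  intro x _
  simpa using hstable x 1 (by simpa [monomial] using hmem (0, 0))

variable (K q) in
def basisMonomial : Basis (ℕ × ℕ) K (qHeis K q) :=
  .mk linearIndependent_monomial span_monomial

theorem basisMonomial_apply (p : ℕ × ℕ) : basisMonomial K q p = monomial K q p :=
  Basis.mk_apply _ _ p

theorem basisMonomial_repr_monomial (p : ℕ × ℕ) :
    (basisMonomial K q).repr (monomial K q p) = single p 1 := by
  rw [← basisMonomial_apply, Basis.repr_self]

theorem repr_qA_mul_sub_mul_qA (x : qHeis K q) (a b : ℕ) :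
    (basisMonomial K q).repr (qA K q * x - x * qA K q) (a, b + 1) =
      (q ^ a - 1) * (basisMonomial K q).repr x (a, b) +
        qInt K q (a + 1 : ℕ) * (basisMonomial K q).repr x (a + 1, b + 1) := by
  set β := basisMonomial K q
  have key : β.coord (a, b + 1) ∘ₗ
      (LinearMap.mulLeft K (qA K q) - LinearMap.mulRight K (qA K q)) =
      (q ^ a - 1) • β.coord (a, b) + qInt K q (a + 1 : ℕ) • β.coord (a + 1, b + 1) := by
    refine β.ext fun ⟨i, j⟩ => ?_
    simp only [β, LinearMap.comp_apply, LinearMap.sub_apply, LinearMap.mulLeft_apply,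
      LinearMap.mulRight_apply, basisMonomial_apply, qA_mul_monomial, monomial_mul_qA,
      LinearMap.add_apply, LinearMap.smul_apply, Basis.coord_apply, map_add, map_sub, map_smul,
      basisMonomial_repr_monomial, single_apply, Prod.mk.injEq, smul_eq_mul]
    obtain _ | i := i
    · simp only [Nat.cast_zero, qInt_zero, zero_mul, add_zero]
      split_ifs <;> simp_all
    · simp only [Nat.add_sub_cancel]
      split_ifs <;> simp_all
  simpa using LinearMap.congr_fun key x

theorem repr_mul_qB_sub_qB_mul (x : qHeis K q) (a b : ℕ) :
    (basisMonomial K q).repr (x * qB K q - qB K q * x) (a + 1, b) =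
      (q ^ b - 1) * (basisMonomial K q).repr x (a, b) +
        qInt K q (b + 1 : ℕ) * (basisMonomial K q).repr x (a + 1, b + 1) := by
  set β := basisMonomial K q
  have key : β.coord (a + 1, b) ∘ₗ
      (LinearMap.mulRight K (qB K q) - LinearMap.mulLeft K (qB K q)) =
      (q ^ b - 1) • β.coord (a, b) + qInt K q (b + 1 : ℕ) • β.coord (a + 1, b + 1) := by
    refine β.ext fun ⟨i, j⟩ => ?_
    simp only [β, LinearMap.comp_apply, LinearMap.sub_apply, LinearMap.mulLeft_apply,
      LinearMap.mulRight_apply, basisMonomial_apply, qB_mul_monomial, monomial_mul_qB,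
      LinearMap.add_apply, LinearMap.smul_apply, Basis.coord_apply, map_add, map_sub, map_smul,
      basisMonomial_repr_monomial, single_apply, Prod.mk.injEq, smul_eq_mul]
    obtain _ | j := j
    · simp only [Nat.cast_zero, qInt_zero, zero_mul, add_zero]
      split_ifs <;> simp_all
    · simp only [Nat.add_sub_cancel]
      split_ifs <;> simp_all
  simpa using LinearMap.congr_fun key x

theorem pow_eq_one_of_repr_ne_zero (hq1 : q ≠ 1) {z : qHeis K q}
    (hz : z ∈ Subalgebra.center K (qHeis K q)) {p : ℕ × ℕ}
    (hp : (basisMonomial K q).repr z p ≠ 0) : q ^ p.1 = 1 ∧ q ^ p.2 = 1 := by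
  set c := (basisMonomial K q).repr z
  obtain ⟨N, hN⟩ : ∃ N, ∀ p : ℕ × ℕ, N ≤ p.1 + p.2 → c p = 0 :=
    ⟨c.support.sup (fun p => p.1 + p.2) + 1, fun p hp => notMem_support_iff.1 fun hmem => by
      have := Finset.le_sup (f := fun p : ℕ × ℕ => p.1 + p.2) hmem
      omega⟩
  have hA : ∀ a b, (q ^ a - 1) * c (a, b) + qInt K q (a + 1 : ℕ) * c (a + 1, b + 1) = 0 := by
    intro a b
    rw [← repr_qA_mul_sub_mul_qA, Subalgebra.mem_center_iff.1 hz, sub_self, map_zero,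
      coe_zero, Pi.zero_apply]
  have hB : ∀ a b, (q ^ a - 1) * c (b, a) + qInt K q (a + 1 : ℕ) * c (b + 1, a + 1) = 0 := by
    intro a b
    rw [← repr_mul_qB_sub_qB_mul, Subalgebra.mem_center_iff.1 hz, sub_self, map_zero,
      coe_zero, Pi.zero_apply]
  constructor
  · by_contra h
    exact hp (eq_zero_of_pow_ne_one_of_rel hq1 (f := fun a b => c (a, b)) (N := N)
      (fun a b h => hN _ (by simp only; omega)) hA h p.2)
  · by_contra h
    exact hp (eq_zero_of_pow_ne_one_of_rel hq1 (f := fun a b => c (b, a)) (N := N)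
      (fun a b h => hN _ (by simp only; omega)) hB h p.1)

theorem monomial_mem_adjoin {n : ℕ} {p : ℕ × ℕ} (h₁ : n ∣ p.1) (h₂ : n ∣ p.2) :
    monomial K q p ∈ Algebra.adjoin K {qA K q ^ n, qB K q ^ n} := by
  obtain ⟨k, hk⟩ := h₁
  obtain ⟨l, hl⟩ := h₂
  rw [monomial, hk, hl, pow_mul, pow_mul]
  exact mul_mem (pow_mem (Algebra.subset_adjoin (by simp)) _)
    (pow_mem (Algebra.subset_adjoin (by simp)) _)

theorem center_eq_adjoin_pow_orderOf (hq1 : q ≠ 1) :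
    Subalgebra.center K (qHeis K q) =
      Algebra.adjoin K {qA K q ^ orderOf q, qB K q ^ orderOf q} := by
  refine le_antisymm (fun z hz => ?_) (Algebra.adjoin_le ?_)
  · refine (Subalgebra.mem_toSubmodule _).1 <|
      (Submodule.span_le (p := Subalgebra.toSubmodule _)).2 ?_
        ((basisMonomial K q).mem_span_repr_support z)
    rintro _ ⟨p, hp, rfl⟩
    obtain ⟨h₁, h₂⟩ := pow_eq_one_of_repr_ne_zero hq1 hz (mem_support_iff.1 hp)
    rw [basisMonomial_apply]
    exact monomial_mem_adjoin (orderOf_dvd_of_pow_eq_one h₁) (orderOf_dvd_of_pow_eq_one h₂)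
  · rintro _ (rfl | rfl)
    exacts [qA_pow_mem_center hq1 (pow_orderOf_eq_one q),
      qB_pow_mem_center hq1 (pow_orderOf_eq_one q)]

end qHeis

end

theorem qHeis_center_eq_adjoin_of_torsion_type_general
    {K : Type*} [Field K] (q : K) (hq1 : q ≠ 1)
    (d : ℕ) (hd : 0 < d) (hqd : q ^ d = 1)
    (hmin : ∀ k : ℕ, 0 < k → k < d → q ^ k ≠ 1) :
    Subalgebra.center K (qHeis K q) =
      Algebra.adjoin K ({qA K q ^ d, qB K q ^ d} : Set (qHeis K q)) := by
  have horder : orderOf q = d := (orderOf_eq_iff hd).2 ⟨hqd, fun k hk hk0 => hmin k hk0 hk⟩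
  exact horder ▸ qHeis.center_eq_adjoin_pow_orderOf hq1

/-- If `q ≠ 1` is a root of unity of multiplicative order `d`, then the center of the
`q`-deformed Heisenberg algebra `H_q` over `K` is the `K`-subalgebra generated by `A^d`
and `B^d`: `Z(H_q) = K[A^d, B^d]`. -/
theorem qHeis_center_eq_adjoin_of_torsion_type
    {K : Type*} [Field K] (q : K) (hq0 : q ≠ 0) (hq1 : q ≠ 1)
    (d : ℕ) (hd : 0 < d) (hqd : q ^ d = 1)
    (hmin : ∀ k : ℕ, 0 < k → k < d → q ^ k ≠ 1) :
    Subalgebra.center K (qHeis K q) =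
      Algebra.adjoin K ({qA K q ^ d, qB K q ^ d} : Set (qHeis K q)) :=
  qHeis_center_eq_adjoin_of_torsion_type_general q hq1 d hd hqd hmin

end
end

section
/- Let K be a field and let q ∈ K, q ≠ 1, be a root of unity of multiplicative order p (i.e., p is the smallest positive integer with q^p = 1). Then the q-deformed Heisenberg algebra H_q over K, viewed as a module over its center Z(H_q), is spanned by the p² elements {B^i A^j : 0 ≤ i, j < p}; that is, every element of H_q is a Z(H_q)-linear combination of the B^i A^j with 0 ≤ i, j < p. -/
noncomputable section

/-!
From `AB = q·BA + 1` one gets `A·Bⁿ = qⁿ·BⁿA + [n]_q·Bⁿ⁻¹` and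
`Aⁿ·B = qⁿ·BAⁿ + [n]_q·Aⁿ⁻¹`, with `[n]_q = 1 + q + ⋯ + qⁿ⁻¹`. Normal ordering with the first
formula shows that the monomials `BⁱAʲ` span `H_q` over `K`. When `q ≠ 1` and `qᵖ = 1` we have
`[p]_q = 0`, so `Aᵖ` and `Bᵖ` commute with both generators and are central; dividing the
exponents by `p` then writes every `BⁱAʲ` as a central multiple of one with `i, j < p`.
-/

open Finset

def IsQHeisPair {K R : Type*} [CommRing K] [Ring R] [Algebra K R] (q : K) (a b : R) : Prop :=
  a * b = q • (b * a) + 1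

theorem mem_center_of_forall_commute {K R : Type*} [CommRing K] [Ring R] [Algebra K R]
    {s : Set R} (hs : Algebra.adjoin K s = ⊤) {x : R} (hx : ∀ y ∈ s, Commute x y) :
    x ∈ Subalgebra.center K R :=
  Subalgebra.mem_center_iff.mpr fun y =>
    (Algebra.commute_of_mem_adjoin_of_forall_mem_commute (hs ▸ Algebra.mem_top) hx).eq.symm

namespace IsQHeisPair

variable {K R : Type*} [CommRing K] [Ring R] [Algebra K R] {q : K} {a b : R}

theorem op (h : IsQHeisPair q a b) : IsQHeisPair q (MulOpposite.op b) (MulOpposite.op a) := by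
  rw [IsQHeisPair, ← MulOpposite.op_mul, h, MulOpposite.op_add, MulOpposite.op_smul,
    MulOpposite.op_mul, MulOpposite.op_one]

theorem mul_pow_succ (h : IsQHeisPair q a b) (n : ℕ) :
    a * b ^ (n + 1) =
      q ^ (n + 1) • (b ^ (n + 1) * a) + (∑ i ∈ range (n + 1), q ^ i) • b ^ n := by
  induction n with
  | zero => simpa [IsQHeisPair] using h
  | succ n ih =>
    rw [pow_succ b (n + 1), ← mul_assoc, ih, add_mul, smul_mul_assoc, smul_mul_assoc,
      mul_assoc, h, mul_add, mul_smul_comm, mul_one]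
    simp only [sum_range_succ, smul_add, smul_smul, add_smul, ← mul_assoc, ← pow_succ]
    rw [pow_succ q (n + 1)]
    abel

theorem pow_succ_mul (h : IsQHeisPair q a b) (n : ℕ) :
    a ^ (n + 1) * b =
      q ^ (n + 1) • (b * a ^ (n + 1)) + (∑ i ∈ range (n + 1), q ^ i) • a ^ n := by
  simpa [← MulOpposite.op_pow, ← MulOpposite.op_mul] using
    congrArg MulOpposite.unop (h.op.mul_pow_succ n)

theorem commute_pow_right (h : IsQHeisPair q a b) {p : ℕ} (hsum : ∑ i ∈ range p, q ^ i = 0) :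
    Commute a (b ^ p) := by
  have hqp : q ^ p = 1 := by rw [← sub_eq_zero, ← geom_sum_mul, hsum, zero_mul]
  rcases p with _ | n
  · rw [pow_zero]; exact Commute.one_right a
  · rw [Commute, SemiconjBy, h.mul_pow_succ, hsum, hqp, zero_smul, add_zero, one_smul]

theorem commute_pow_left (h : IsQHeisPair q a b) {p : ℕ} (hsum : ∑ i ∈ range p, q ^ i = 0) :
    Commute (a ^ p) b := by
  have hqp : q ^ p = 1 := by rw [← sub_eq_zero, ← geom_sum_mul, hsum, zero_mul]
  rcases p with _ | n
  · rw [pow_zero]; exact Commute.one_left b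
  · rw [Commute, SemiconjBy, h.pow_succ_mul, hsum, hqp, zero_smul, add_zero, one_smul]

theorem span_monomials_eq_top (h : IsQHeisPair q a b) (hgen : Algebra.adjoin K {a, b} = ⊤) :
    Submodule.span K (Set.range fun ij : ℕ × ℕ => b ^ ij.1 * a ^ ij.2) = ⊤ := by
  set M := Submodule.span K (Set.range fun ij : ℕ × ℕ => b ^ ij.1 * a ^ ij.2)
  have hmem (i j : ℕ) : b ^ i * a ^ j ∈ M := Submodule.subset_span ⟨(i, j), rfl⟩
  have stable (x : R) (hx : ∀ i j : ℕ, x * (b ^ i * a ^ j) ∈ M) : ∀ m ∈ M, x * m ∈ M :=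
    (Submodule.span_le (p := M.comap (LinearMap.mulLeft K x))).mpr
      (Set.range_subset_iff.mpr fun ij => hx ij.1 ij.2)
  have ha : ∀ m ∈ M, a * m ∈ M := stable a fun i j => by
    rcases i with _ | n
    · simpa [← pow_succ'] using hmem 0 (j + 1)
    · rw [← mul_assoc, h.mul_pow_succ, add_mul, smul_mul_assoc, smul_mul_assoc, mul_assoc,
        ← pow_succ']
      exact M.add_mem (M.smul_mem _ (hmem _ _)) (M.smul_mem _ (hmem _ _))
  have hb : ∀ m ∈ M, b * m ∈ M := stable b fun i j => by
    rw [← mul_assoc, ← pow_succ']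
    exact hmem _ _
  have hmul : ∀ x ∈ Algebra.adjoin K {a, b}, ∀ m ∈ M, x * m ∈ M := by
    intro x hx
    induction hx using Algebra.adjoin_induction with
    | mem x hx => rcases hx with rfl | rfl; exacts [ha, hb]
    | algebraMap r => exact fun m hm => Algebra.smul_def r m ▸ M.smul_mem r hm
    | add x y _ _ hx hy => exact fun m hm => add_mul x y m ▸ M.add_mem (hx m hm) (hy m hm)
    | mul x y _ _ hx hy => exact fun m hm => (mul_assoc x y m).symm ▸ hx _ (hy m hm)
  refine eq_top_iff.mpr fun x _ => ?_
  simpa using hmul x (hgen ▸ Algebra.mem_top) 1 (by simpa using hmem 0 0)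

theorem pow_left_mem_center (h : IsQHeisPair q a b) (hgen : Algebra.adjoin K {a, b} = ⊤)
    {p : ℕ} (hsum : ∑ i ∈ range p, q ^ i = 0) : a ^ p ∈ Subalgebra.center K R :=
  mem_center_of_forall_commute hgen <| by
    simpa [Set.forall_mem_insert] using h.commute_pow_left hsum

theorem pow_right_mem_center (h : IsQHeisPair q a b) (hgen : Algebra.adjoin K {a, b} = ⊤)
    {p : ℕ} (hsum : ∑ i ∈ range p, q ^ i = 0) : b ^ p ∈ Subalgebra.center K R :=
  mem_center_of_forall_commute hgen <| by
    simpa [Set.forall_mem_insert] using (h.commute_pow_right hsum).symm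

theorem span_center_monomials_eq_top (h : IsQHeisPair q a b)
    (hgen : Algebra.adjoin K {a, b} = ⊤) {p : ℕ} (hp : 0 < p)
    (hsum : ∑ i ∈ range p, q ^ i = 0) :
    Submodule.span (Subalgebra.center K R)
      (Set.range fun ij : Fin p × Fin p => b ^ (ij.1 : ℕ) * a ^ (ij.2 : ℕ)) = ⊤ := by
  set N := Submodule.span (Subalgebra.center K R)
    (Set.range fun ij : Fin p × Fin p => b ^ (ij.1 : ℕ) * a ^ (ij.2 : ℕ))
  have ha := h.pow_left_mem_center hgen hsum
  have hb := h.pow_right_mem_center hgen hsum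
  have hmem (i j : ℕ) : b ^ i * a ^ j ∈ N := by
    have hz : (b ^ p) ^ (i / p) * (a ^ p) ^ (j / p) ∈ Subalgebra.center K R :=
      mul_mem (pow_mem hb _) (pow_mem ha _)
    have hdecomp : b ^ i * a ^ j =
        (b ^ p) ^ (i / p) * (a ^ p) ^ (j / p) * (b ^ (i % p) * a ^ (j % p)) := by
      conv_lhs => rw [← Nat.div_add_mod i p, ← Nat.div_add_mod j p, pow_add, pow_add, pow_mul,
        pow_mul]
      rw [mul_assoc, ← mul_assoc (b ^ (i % p)),
        Subalgebra.mem_center_iff.mp (pow_mem ha (j / p)) (b ^ (i % p))]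
      simp only [mul_assoc]
    rw [hdecomp]
    exact N.smul_mem ⟨_, hz⟩ (Submodule.subset_span
      ⟨(⟨i % p, Nat.mod_lt i hp⟩, ⟨j % p, Nat.mod_lt j hp⟩), rfl⟩)
  have hle : Submodule.span K (Set.range fun ij : ℕ × ℕ => b ^ ij.1 * a ^ ij.2) ≤
      N.restrictScalars K :=
    Submodule.span_le.mpr (Set.range_subset_iff.mpr fun ij => hmem ij.1 ij.2)
  rw [h.span_monomials_eq_top hgen, top_le_iff, Submodule.restrictScalars_eq_top_iff] at hle
  exact hle

end IsQHeisPair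

theorem isQHeisPair_qA_qB {K : Type*} [Field K] (q : K) : IsQHeisPair q (qA K q) (qB K q) := by
  simpa [IsQHeisPair, qA, qB] using RingQuot.mkAlgHom_rel K (qHeisRel.rel (K := K) (q := q))

theorem adjoin_qA_qB_eq_top {K : Type*} [Field K] (q : K) :
    Algebra.adjoin K {qA K q, qB K q} = ⊤ := by
  have : ({qA K q, qB K q} : Set (qHeis K q)) =
      RingQuot.mkAlgHom K (qHeisRel K q) '' Set.range (FreeAlgebra.ι K) := by
    ext; simp [Fin.exists_fin_two, qA, qB, eq_comm]
  rw [this, ← AlgHom.map_adjoin, FreeAlgebra.adjoin_range_ι, Algebra.map_top,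
    AlgHom.range_eq_top]
  exact RingQuot.mkAlgHom_surjective K _

theorem qHeis_spanned_over_center_of_torsion_type_general
    {K : Type*} [Field K] (q : K) (hq1 : q ≠ 1)
    (p : ℕ) (hp : 0 < p) (hqp : q ^ p = 1) :
    ∀ x : qHeis K q, ∃ c : Fin p × Fin p → qHeis K q,
      (∀ ij, c ij ∈ Subalgebra.center K (qHeis K q)) ∧
      x = ∑ ij : Fin p × Fin p,
            c ij * (qB K q ^ (ij.1 : ℕ) * qA K q ^ (ij.2 : ℕ)) := by
  intro x
  have hsum : ∑ i ∈ range p, q ^ i = 0 := by rw [geom_sum_eq hq1, hqp, sub_self, zero_div]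
  have hspan :=
    (isQHeisPair_qA_qB q).span_center_monomials_eq_top (adjoin_qA_qB_eq_top q) hp hsum
  obtain ⟨c, hc⟩ :=
    (Submodule.mem_span_range_iff_exists_fun _).mp (hspan ▸ Submodule.mem_top (x := x))
  exact ⟨fun ij => c ij, fun ij => (c ij).2, hc.symm⟩

/-- If `q ≠ 1` is a root of unity of multiplicative order `p`, then the `q`-deformed
Heisenberg algebra `H_q`, viewed as a module over its center, is spanned by the `p²`
elements `B^i A^j` with `0 ≤ i, j < p`: every element of `H_q` is a linear combination of
these with coefficients in the center `Z(H_q)`. -/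
theorem qHeis_spanned_over_center_of_torsion_type
    {K : Type*} [Field K] (q : K) (hq0 : q ≠ 0) (hq1 : q ≠ 1)
    (p : ℕ) (hp : 0 < p) (hqp : q ^ p = 1)
    (hmin : ∀ k : ℕ, 0 < k → k < p → q ^ k ≠ 1) :
    ∀ x : qHeis K q, ∃ c : Fin p × Fin p → qHeis K q,
      (∀ ij, c ij ∈ Subalgebra.center K (qHeis K q)) ∧
      x = ∑ ij : Fin p × Fin p,
            c ij * (qB K q ^ (ij.1 : ℕ) * qA K q ^ (ij.2 : ℕ)) :=
  qHeis_spanned_over_center_of_torsion_type_general q hq1 p hp hqp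
end
end
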